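/- arXiv:gr-qc/0606113 — 4 statements merged into one kernel-verified Lean document; each statement's English description precedes it below -/
import Mathlib

section
/- If f : [t₀,∞) → ℝ is C¹ with f square-integrable (∫ f² < ∞) and deriv f bounded, then f(t) → 0 as t → ∞. -/
/-!
A function with derivative bounded by `M` is `M`-Lipschitz, so wherever `|f t| ≥ ε` we still have
`|f| ≥ ε / 2` on `[t, t + δ]` for a `δ` depending only on `ε` and `M`; there `∫ f² ≥ δ ε² / 4`.
But integrability of `f²` forces `∫_t^{t+δ} f² → 0`, so eventually `|f t| < ε`.
-/

open Set Filter Topology MeasureTheory NNReal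

theorem MeasureTheory.IntegrableOn.tendsto_intervalIntegral_self_add_atTop
    {E : Type*} [NormedAddCommGroup E] [NormedSpace ℝ E] {g : ℝ → E} {a : ℝ}
    (hg : IntegrableOn g (Ioi a)) (δ : ℝ) :
    Tendsto (fun t => ∫ x in t..t + δ, g x) atTop (𝓝 0) := by
  have hlim : Tendsto (fun b => ∫ x in a..b, g x) atTop (𝓝 (∫ x in Ioi a, g x)) :=
    intervalIntegral_tendsto_integral_Ioi a hg tendsto_id
  have hdiff := (hlim.comp (tendsto_atTop_add_const_right _ δ tendsto_id)).sub hlim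
  rw [sub_self] at hdiff
  have hii : ∀ b, a ≤ b → IntervalIntegrable g volume a b := fun b hb =>
    (intervalIntegrable_iff_integrableOn_Ioc_of_le hb).2 (hg.mono_set Ioc_subset_Ioi_self)
  refine hdiff.congr' ?_
  filter_upwards [eventually_ge_atTop a, eventually_ge_atTop (a - δ)] with t hat hatδ
  exact intervalIntegral.integral_interval_sub_left (hii (t + δ) (by linarith)) (hii t hat)

theorem mul_sq_le_integral_sq_of_lipschitzOnWith {f : ℝ → ℝ} {K : ℝ≥0} {t δ c : ℝ}
    (hf : LipschitzOnWith K f (Icc t (t + δ))) (hδ : 0 ≤ δ) (hc : 0 ≤ c)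
    (hft : K * δ + c ≤ |f t|) :
    δ * c ^ 2 ≤ ∫ x in t..t + δ, f x ^ 2 := by
  have htδ : t ≤ t + δ := le_add_of_nonneg_right hδ
  have hlow : ∀ x ∈ Icc t (t + δ), c ^ 2 ≤ f x ^ 2 := by
    intro x hx
    have hdist : |f x - f t| ≤ K * δ := by
      have := hf.dist_le_mul x hx t (left_mem_Icc.2 htδ)
      rw [Real.dist_eq, Real.dist_eq, abs_of_nonneg (sub_nonneg.2 hx.1)] at this
      exact this.trans (by gcongr; linarith [hx.2])
    have : c ≤ |f x| := by linarith [abs_sub_abs_le_abs_sub (f t) (f x), abs_sub_comm (f t) (f x)]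
    nlinarith [sq_abs (f x)]
  have hint : IntervalIntegrable (fun x => f x ^ 2) volume t (t + δ) :=
    ((hf.continuousOn).pow 2).intervalIntegrable_of_Icc htδ
  calc δ * c ^ 2 = ∫ _ in t..t + δ, c ^ 2 := by simp
    _ ≤ ∫ x in t..t + δ, f x ^ 2 :=
      intervalIntegral.integral_mono_on htδ intervalIntegrable_const hint hlow

theorem LipschitzOnWith.tendsto_zero_of_integrableOn_sq {f : ℝ → ℝ} {K : ℝ≥0} {a : ℝ}
    (hf : LipschitzOnWith K f (Ioi a)) (hsq : IntegrableOn (fun t => f t ^ 2) (Ioi a)) :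
    Tendsto f atTop (𝓝 0) := by
  refine Metric.tendsto_nhds.2 fun ε hε => ?_
  obtain ⟨δ, hδ, hKδ⟩ := exists_pos_mul_lt (half_pos hε) K
  have hsmall := (tendsto_order.1 (hsq.tendsto_intervalIntegral_self_add_atTop δ)).2
    (δ * (ε / 2) ^ 2) (by positivity)
  filter_upwards [hsmall, eventually_gt_atTop a] with t hsmall_t hat
  rw [Real.dist_0_eq_abs]
  by_contra! hft
  have hlip : LipschitzOnWith K f (Icc t (t + δ)) := hf.mono fun x hx => hat.trans_le hx.1
  exact (hsmall_t.trans_le (mul_sq_le_integral_sq_of_lipschitzOnWith hlip hδ.le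
    (half_pos hε).le (by linarith))).false

/-- A C¹ function on `[t₀,∞)` which is square-integrable and has
bounded derivative tends to `0` at infinity. -/
theorem sq_integrable_bounded_deriv_tendsto_zero (t₀ : ℝ) (f : ℝ → ℝ)
    (hf : ContDiffOn ℝ 1 f (Set.Ici t₀))
    (hint : IntegrableOn (fun t => (f t) ^ 2) (Set.Ici t₀))
    (hbd : ∃ M : ℝ, ∀ t, t₀ ≤ t → |deriv f t| ≤ M) :
    Filter.Tendsto f Filter.atTop (nhds 0) := by
  obtain ⟨M, hM⟩ := hbd
  have hdiff : ∀ x ∈ Ioi t₀, DifferentiableAt ℝ f x := fun x hx =>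
    (hf.differentiableOn one_ne_zero).differentiableAt (Ici_mem_nhds hx)
  have hlip : LipschitzOnWith M.toNNReal f (Ioi t₀) :=
    (convex_Ioi t₀).lipschitzOnWith_of_nnnorm_deriv_le hdiff fun x hx => by
      simpa [← NNReal.coe_le_coe] using (hM x hx.le).trans (le_max_left M 0)
  exact hlip.tendsto_zero_of_integrableOn_sq (hint.mono_set Ioi_subset_Ici_self)
end

section
/- Let φ : [t₀,∞) → ℝ be C¹ with deriv φ not integrable (∫ₜ₀^∞ |deriv φ| = ∞), and let W : [t₀,∞) → ℝ be C¹ with W ≥ 1. Fix δ > 1 and ε > 0, and suppose that on every subinterval L ⊆ [T,∞) on which W ≥ δ holds, one has deriv W ≤ -ε·|deriv φ|·W. Then limsup_{t→∞} W(t) ≤ δ. -/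
/-!
Where `W ≥ δ` the decay hypothesis makes `W` nonincreasing, so once `W` has dropped to `δ` it can
never climb above `δ` again. If instead `W > δ` for all large times, then `W' ≤ -ε |φ'| W ≤ -ε |φ'|`
together with `W ≥ 1` bounds `ε ∫ |φ'|` by the finite drop of `W`, making `φ'` integrable.
-/

open Filter MeasureTheory Set

theorem le_of_deriv_nonpos_of_ge {W : ℝ → ℝ} {δ s t : ℝ} (hst : s ≤ t)
    (hWc : ContinuousOn W (Icc s t)) (hWd : ∀ x ∈ Ioo s t, DifferentiableAt ℝ W x)
    (hderiv : ∀ x ∈ Ioo s t, δ ≤ W x → deriv W x ≤ 0) (hs : W s ≤ δ) : W t ≤ δ := by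
  -- `u` is the last time in `[s, t]` at which `W ≤ δ`; after it `W > δ`, so `W` decreases.
  have hS : IsCompact (Icc s t ∩ W ⁻¹' Iic δ) :=
    isCompact_Icc.of_isClosed_subset (hWc.preimage_isClosed_of_isClosed isClosed_Icc isClosed_Iic)
      inter_subset_left
  obtain ⟨u, ⟨⟨hsu, hut⟩, hWu⟩, hu_max⟩ := hS.exists_isGreatest ⟨s, ⟨⟨le_rfl, hst⟩, hs⟩⟩
  have hgt : ∀ x ∈ Ioo u t, δ < W x := fun x hx =>
    lt_of_not_ge fun hWx => (hx.1.trans_le (hu_max ⟨⟨hsu.trans hx.1.le, hx.2.le⟩, hWx⟩)).false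
  have hsub : Ioo u t ⊆ Ioo s t := Ioo_subset_Ioo_left hsu
  have hanti : AntitoneOn W (Icc u t) := by
    refine antitoneOn_of_deriv_nonpos (convex_Icc u t) (hWc.mono (Icc_subset_Icc_left hsu))
      ?_ ?_ <;> rw [interior_Icc]
    · exact fun x hx => (hWd x (hsub hx)).differentiableWithinAt
    · exact fun x hx => hderiv x (hsub hx) (hgt x hx).le
  calc W t ≤ W u := hanti (left_mem_Icc.2 hut) (right_mem_Icc.2 hut) hut
    _ ≤ δ := hWu

theorem mul_intervalIntegral_abs_le_sub {f W : ℝ → ℝ} {a b ε : ℝ} (hab : a ≤ b)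
    (hf : ContinuousOn f (Icc a b)) (hWc : ContinuousOn W (Icc a b))
    (hWd : ∀ x ∈ Ioo a b, DifferentiableAt ℝ W x)
    (hderiv : ∀ x ∈ Ioo a b, deriv W x ≤ -ε * |f x|) :
    ε * ∫ x in a..b, |f x| ≤ W a - W b := by
  rw [← intervalIntegral.integral_const_mul]
  have h := intervalIntegral.integral_le_sub_of_hasDeriv_right_of_le (g := fun x => -W x)
    (φ := fun x => ε * |f x|) hab hWc.neg
    (fun x hx => (hWd x hx).hasDerivAt.neg.hasDerivWithinAt)
    (hf.abs.const_smul ε).integrableOn_Icc (fun x hx => by linarith [hderiv x hx])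
  linarith

theorem integrableOn_Ioi_of_deriv_le_neg_mul_abs {f W : ℝ → ℝ} {T ε m : ℝ} (hε : 0 < ε)
    (hf : ContinuousOn f (Ici T)) (hWc : ContinuousOn W (Ici T))
    (hWd : ∀ x ∈ Ioi T, DifferentiableAt ℝ W x) (hWm : ∀ x ∈ Ici T, m ≤ W x)
    (hderiv : ∀ x ∈ Ioi T, deriv W x ≤ -ε * |f x|) : IntegrableOn f (Ioi T) := by
  refine integrableOn_Ioi_of_intervalIntegral_norm_bounded ((W T - m) / ε) T
    (fun b => (hf.mono Icc_subset_Ici_self).integrableOn_Icc.mono_set Ioc_subset_Icc_self)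
    tendsto_id (eventually_ge_atTop T |>.mono fun b hb => ?_)
  rw [id, le_div_iff₀' hε]
  calc ε * ∫ x in T..b, ‖f x‖ ≤ W T - W b :=
        mul_intervalIntegral_abs_le_sub hb (hf.mono Icc_subset_Ici_self)
          (hWc.mono Icc_subset_Ici_self) (fun x hx => hWd x hx.1) (fun x hx => hderiv x hx.1)
    _ ≤ W T - m := by linarith [hWm b hb]

theorem ContDiffOn.continuousOn_deriv_Ioi {φ : ℝ → ℝ} {a : ℝ} (hφ : ContDiffOn ℝ 1 φ (Ici a)) :
    ContinuousOn (deriv φ) (Ioi a) :=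
  (hφ.mono Ioi_subset_Ici_self).continuousOn_deriv_of_isOpen isOpen_Ioi le_rfl

-- `deriv φ a` is a junk value, but it only affects a null set.
theorem ContDiffOn.integrableOn_deriv_Icc {φ : ℝ → ℝ} {a : ℝ} (hφ : ContDiffOn ℝ 1 φ (Ici a))
    (b : ℝ) : IntegrableOn (deriv φ) (Icc a b) := by
  have hcont : ContinuousOn (derivWithin φ (Ici a)) (Icc a b) :=
    (hφ.continuousOn_derivWithin (uniqueDiffOn_Ici a) le_rfl).mono Icc_subset_Ici_self
  refine (integrableOn_Icc_iff_integrableOn_Ioc (by simp)).2 <|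
    (hcont.integrableOn_Icc.mono_set Ioc_subset_Icc_self).congr_fun (fun x hx => ?_)
      measurableSet_Ioc
  exact derivWithin_of_mem_nhds (Ici_mem_nhds hx.1)

theorem limsup_W_le_general (t₀ δ ε : ℝ) (φ W : ℝ → ℝ)
    (hφ : ContDiffOn ℝ 1 φ (Set.Ici t₀))
    (hW : ContDiffOn ℝ 1 W (Set.Ici t₀))
    (hnonint : ¬ IntegrableOn (fun t => |deriv φ t|) (Set.Ici t₀))
    (hW1 : ∀ t, t₀ ≤ t → 1 ≤ W t)
    (hε : 0 < ε)
    (hdecay : ∀ t, t₀ ≤ t → δ ≤ W t → deriv W t ≤ -ε * |deriv φ t| * W t) :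
    Filter.limsup W Filter.atTop ≤ δ := by
  have hWd : ∀ x ∈ Ioi t₀, DifferentiableAt ℝ W x := fun x hx =>
    (hW.differentiableOn one_ne_zero).differentiableAt (Ici_mem_nhds hx)
  have hderiv_le : ∀ x ∈ Ioi t₀, δ ≤ W x → deriv W x ≤ -ε * |deriv φ x| := fun x hx hδx =>
    (hdecay x hx.le hδx).trans <| by
      nlinarith [mul_nonneg (mul_nonneg hε.le (abs_nonneg (deriv φ x))) (sub_nonneg.2 (hW1 x hx.le))]
  obtain ⟨s, hs, hWs⟩ : ∃ s > t₀, W s ≤ δ := by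
    by_contra! hgt
    have hT : t₀ < t₀ + 1 := lt_add_one t₀
    apply hnonint
    rw [← Icc_union_Ioi_eq_Ici hT.le]
    refine ((hφ.integrableOn_deriv_Icc _).union ?_).abs
    exact integrableOn_Ioi_of_deriv_le_neg_mul_abs hε
      (hφ.continuousOn_deriv_Ioi.mono (Ici_subset_Ioi.2 hT))
      (hW.continuousOn.mono (Ici_subset_Ici.2 hT.le)) (fun x hx => hWd x (hT.trans hx))
      (fun x hx => hW1 x (hT.le.trans hx))
      (fun x hx => hderiv_le x (hT.trans hx) (hgt x (hT.trans hx)).le)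
  have hle : ∀ t ≥ s, W t ≤ δ := fun t hst =>
    le_of_deriv_nonpos_of_ge hst (hW.continuousOn.mono (Icc_subset_Ici_iff hst |>.2 hs.le))
      (fun x hx => hWd x (hs.trans hx.1)) (fun x hx hδx => (hderiv_le x (hs.trans hx.1) hδx).trans
        (mul_nonpos_of_nonpos_of_nonneg (neg_nonpos.2 hε.le) (abs_nonneg _))) hWs
  exact limsup_le_of_le (isCoboundedUnder_le_of_eventually_le atTop
    ((eventually_ge_atTop t₀).mono hW1)) ((eventually_ge_atTop s).mono hle)

/-- If `|φ'|` is not integrable on `[t₀,∞)`, `W ≥ 1` is C¹, and wherever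
`W ≥ δ` (with `δ > 1`) one has `W' ≤ -ε |φ'| W`, then `limsup W ≤ δ`. -/
theorem limsup_W_le (t₀ δ ε : ℝ) (φ W : ℝ → ℝ)
    (hφ : ContDiffOn ℝ 1 φ (Set.Ici t₀))
    (hW : ContDiffOn ℝ 1 W (Set.Ici t₀))
    (hnonint : ¬ IntegrableOn (fun t => |deriv φ t|) (Set.Ici t₀))
    (hW1 : ∀ t, t₀ ≤ t → 1 ≤ W t)
    (hδ : 1 < δ) (hε : 0 < ε)
    (hdecay : ∀ t, t₀ ≤ t → δ ≤ W t → deriv W t ≤ -ε * |deriv φ t| * W t) :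
    Filter.limsup W Filter.atTop ≤ δ :=
  limsup_W_le_general t₀ δ ε φ W hφ hW hnonint hW1 hε hdecay
end

section
/- Let n ≥ 3 be an integer and 0 < α < 2/√(n(n-1)). Then (1 - (1/2)·√((n-1)/n)·α)^{-1} < n/(n-1). Consequently, if W : [t₀,∞) → ℝ satisfies limsup_{t→∞} W(t) ≤ (1 - (1/2)√((n-1)/n)·α)^{-1} and the deceleration parameter satisfies q(t) ≤ n(1 - 1/W(t)) - 1 with W(t) ≥ 1, then q(t) < 0 for all sufficiently large t. -/
/-!
The steepness bound `α < 2/√(n(n-1))` says exactly that `(1/2)√((n-1)/n) α < 1/n`, so the bound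
on `limsup W` lies strictly below `n/(n-1)`. Hence eventually `W < n/(n-1)`, and that is precisely
the range of `W` in which `n(1 - 1/W) - 1 < 0`.
-/

open Filter

lemma sqrt_mul_sub_one_eq_mul_sqrt_div {x : ℝ} (hx : 0 < x) :
    √(x * (x - 1)) = x * √((x - 1) / x) := by
  calc √(x * (x - 1)) = √(x ^ 2 * ((x - 1) / x)) := by congr 1; field_simp
    _ = x * √((x - 1) / x) := by rw [Real.sqrt_mul (sq_nonneg x), Real.sqrt_sq hx.le]

lemma half_sqrt_div_mul_lt_inv {x α : ℝ} (hx : 1 < x) (hα : α < 2 / √(x * (x - 1))) :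
    (1 / 2) * √((x - 1) / x) * α < x⁻¹ := by
  have hx0 : 0 < x := by linarith
  have hs : 0 < √((x - 1) / x) := Real.sqrt_pos.2 (div_pos (by linarith) hx0)
  rw [sqrt_mul_sub_one_eq_mul_sqrt_div hx0, lt_div_iff₀ (mul_pos hx0 hs)] at hα
  rw [← one_div, lt_div_iff₀ hx0]
  linarith

lemma inv_one_sub_half_sqrt_div_mul_lt {x α : ℝ} (hx : 1 < x) (hα : α < 2 / √(x * (x - 1))) :
    (1 - (1 / 2) * √((x - 1) / x) * α)⁻¹ < x / (x - 1) := by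
  have hsteep := half_sqrt_div_mul_lt_inv hx hα
  have hx0 : 0 < x := by linarith
  have hgap : (x - 1) / x = 1 - x⁻¹ := by field_simp
  calc (1 - (1 / 2) * √((x - 1) / x) * α)⁻¹ < ((x - 1) / x)⁻¹ := by
        rw [inv_lt_inv₀ (by linarith [inv_lt_one_of_one_lt₀ hx]) (div_pos (by linarith) hx0)]
        linarith
    _ = x / (x - 1) := inv_div _ _

lemma mul_one_sub_one_div_lt_one {x w : ℝ} (hx : 1 < x) (hw : 0 < w) (h : w < x / (x - 1)) :
    x * (1 - 1 / w) < 1 := by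
  rw [lt_div_iff₀ (by linarith)] at h
  rw [mul_one_sub, mul_one_div, sub_lt_comm, lt_div_iff₀ hw]
  linarith

theorem intermediate_acceleration_general (n : ℕ) (hn : 3 ≤ n) (α : ℝ)
    (hα : α < 2 / Real.sqrt ((n : ℝ) * ((n : ℝ) - 1))) :
    (1 - (1 / 2) * Real.sqrt (((n : ℝ) - 1) / n) * α)⁻¹ < (n : ℝ) / ((n : ℝ) - 1) ∧
    ∀ (W q : ℝ → ℝ),
      Filter.limsup (fun t => (W t : EReal)) Filter.atTop ≤
        (((1 - (1 / 2) * Real.sqrt (((n : ℝ) - 1) / n) * α)⁻¹ : ℝ) : EReal) →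
      (∀ t, 1 ≤ W t ∧ q t ≤ (n : ℝ) * (1 - 1 / W t) - 1) →
      ∀ᶠ t in Filter.atTop, q t < 0 := by
  have hn1 : (1 : ℝ) < n := by exact_mod_cast (by omega : 1 < n)
  have hbound := inv_one_sub_half_sqrt_div_mul_lt hn1 hα
  refine ⟨hbound, fun W q hlim hWq => ?_⟩
  filter_upwards [eventually_lt_of_limsup_lt (hlim.trans_lt (EReal.coe_lt_coe_iff.2 hbound))]
    with t ht
  obtain ⟨hW1, hq⟩ := hWq t
  have := mul_one_sub_one_div_lt_one hn1 (by linarith) (EReal.coe_lt_coe_iff.1 ht)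
  linarith

/-- For `n ≥ 3` and `0 < α < 2/√(n(n-1))` one has
`(1 - (1/2)√((n-1)/n) α)⁻¹ < n/(n-1)`; consequently if `limsup W ≤ (1 - (1/2)√((n-1)/n) α)⁻¹`
(in the extended reals), `W ≥ 1` and `q ≤ n(1 - 1/W) - 1` pointwise, then `q < 0`
for all sufficiently large times. -/
theorem intermediate_acceleration (n : ℕ) (hn : 3 ≤ n) (α : ℝ)
    (hα0 : 0 < α) (hα : α < 2 / Real.sqrt ((n : ℝ) * ((n : ℝ) - 1))) :
    (1 - (1 / 2) * Real.sqrt (((n : ℝ) - 1) / n) * α)⁻¹ < (n : ℝ) / ((n : ℝ) - 1) ∧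
    ∀ (W q : ℝ → ℝ),
      Filter.limsup (fun t => (W t : EReal)) Filter.atTop ≤
        (((1 - (1 / 2) * Real.sqrt (((n : ℝ) - 1) / n) * α)⁻¹ : ℝ) : EReal) →
      (∀ t, 1 ≤ W t ∧ q t ≤ (n : ℝ) * (1 - 1 / W t) - 1) →
      ∀ᶠ t in Filter.atTop, q t < 0 :=
  intermediate_acceleration_general n hn α hα
end

section
/- Let V : J → ℝ be positive and C¹, φ : [t₀,∞) → J continuous with V(φ(t)) → V_∞ > 0 and such that V' extends continuously to the closure of J in the extended reals. Then V'(φ(t)) converges in the extended reals as t → ∞. -/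
open Filter Set Topology

/-! By compactness of `EReal`, every cluster point of `Ve (φ t)` is `Ve c` for a cluster point
`c ∈ [a, b]` of `φ t`. If `φ t` has two cluster points `c₁ < c₂`, the intermediate value theorem
makes `φ` take every value in `(c₁, c₂)` at arbitrarily large times, so `V = V_∞` on `(c₁, c₂)`;
then `V' = 0` there and, by continuity, `Ve c₁ = Ve c₂ = 0`. So `V' (φ t)` has a unique cluster
point in the compact space `EReal`, hence converges. -/

theorem frequently_eq_of_mapClusterPt_lt_lt {β α : Type*} [ConditionallyCompleteLinearOrder β]
    [TopologicalSpace β] [OrderTopology β] [DenselyOrdered β]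
    [LinearOrder α] [TopologicalSpace α] [OrderClosedTopology α]
    {f : β → α} {t₀ : β} (hf : ContinuousOn f (Ici t₀)) {c₁ c₂ x : α}
    (h₁ : MapClusterPt c₁ atTop f) (h₂ : MapClusterPt c₂ atTop f) (hx₁ : c₁ < x) (hx₂ : x < c₂) :
    ∃ᶠ t in atTop, f t = x := by
  refine frequently_atTop.2 fun T => ?_
  obtain ⟨t₁, ht₁, hft₁⟩ := frequently_atTop.1 (h₁.frequently (isOpen_Iio.mem_nhds hx₁)) (max T t₀)
  obtain ⟨t₂, ht₂, hft₂⟩ := frequently_atTop.1 (h₂.frequently (isOpen_Ioi.mem_nhds hx₂)) (max T t₀)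
  obtain ⟨t, ht, rfl⟩ := isPreconnected_Ici.intermediate_value ht₁ ht₂
    (hf.mono (Ici_subset_Ici.2 (le_max_right T t₀))) ⟨le_of_lt hft₁, le_of_lt hft₂⟩
  exact ⟨t, le_trans (le_max_left T t₀) ht, rfl⟩

theorem MapClusterPt.exists_mapClusterPt_eq_of_comp {ι X Y : Type*} [TopologicalSpace X]
    [CompactSpace X] [TopologicalSpace Y] [T2Space Y] {l : Filter ι} {ψ : ι → X} {g : X → Y}
    {s : Set X} {y : Y} (hy : MapClusterPt y l (g ∘ ψ)) (hs : IsClosed s) (hg : ContinuousOn g s)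
    (hψ : ∀ᶠ i in l, ψ i ∈ s) : ∃ c ∈ s, MapClusterPt c l ψ ∧ y = g c := by
  obtain ⟨U, hUl, hUy⟩ := mapClusterPt_iff_ultrafilter.1 hy
  obtain ⟨c, -, hUc⟩ := isCompact_univ.ultrafilter_le_nhds (U.map ψ) (by simp)
  have hψU : ∀ᶠ i in (U : Filter ι), ψ i ∈ s := hUl hψ
  have hcs : c ∈ s := hs.mem_of_tendsto hUc hψU
  have hUgc : Tendsto (g ∘ ψ) U (𝓝 (g c)) :=
    (hg c hcs).tendsto.comp (tendsto_nhdsWithin_iff.2 ⟨hUc, hψU⟩)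
  exact ⟨c, hcs, mapClusterPt_iff_ultrafilter.2 ⟨U, hUl, hUc⟩, tendsto_nhds_unique hUy hUgc⟩

theorem deriv_eq_zero_of_mapClusterPt_lt_lt {V φ : ℝ → ℝ} {t₀ L : ℝ}
    (hφ : ContinuousOn φ (Ici t₀)) (hV : Tendsto (fun t => V (φ t)) atTop (𝓝 L)) {c₁ c₂ : EReal}
    (h₁ : MapClusterPt c₁ atTop fun t => (φ t : EReal))
    (h₂ : MapClusterPt c₂ atTop fun t => (φ t : EReal)) {x : ℝ} (hx₁ : c₁ < x) (hx₂ : x < c₂) :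
    deriv V x = 0 := by
  have hconst : ∀ y : ℝ, c₁ < y → y < c₂ → V y = L := fun y hy₁ hy₂ =>
    have hfreq := frequently_eq_of_mapClusterPt_lt_lt
      (continuous_coe_real_ereal.comp_continuousOn hφ) h₁ h₂ hy₁ hy₂
    (tendsto_nhds_unique_of_frequently_eq hV tendsto_const_nhds
      (hfreq.mono fun t ht => by rw [EReal.coe_injective ht])).symm
  have hloc : V =ᶠ[𝓝 x] fun _ => L :=
    eventually_of_mem ((isOpen_Ioo.preimage continuous_coe_real_ereal).mem_nhds ⟨hx₁, hx₂⟩)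
      fun y hy => hconst y hy.1 hy.2
  rw [hloc.deriv_eq, deriv_const]

theorem derivExtension_eq_zero_of_mapClusterPt_lt {V φ : ℝ → ℝ} {t₀ L : ℝ}
    (hφ : ContinuousOn φ (Ici t₀)) (hV : Tendsto (fun t => V (φ t)) atTop (𝓝 L))
    {c₁ c₂ : EReal} {Ve : EReal → EReal} (hVe_cont : ContinuousOn Ve (Icc c₁ c₂))
    (hVe_eq : ∀ x : ℝ, c₁ < x → x < c₂ → Ve x = deriv V x)
    (h₁ : MapClusterPt c₁ atTop fun t => (φ t : EReal))
    (h₂ : MapClusterPt c₂ atTop fun t => (φ t : EReal)) (h : c₁ < c₂) :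
    Ve c₁ = 0 ∧ Ve c₂ = 0 := by
  have hzero : MapsTo Ve (Ioo c₁ c₂) {0} := by
    intro e he
    induction e using EReal.rec with
    | bot => exact absurd he.1 not_lt_bot
    | top => exact absurd he.2 not_top_lt
    | coe x =>
      rw [mem_singleton_iff, hVe_eq x he.1 he.2,
        deriv_eq_zero_of_mapClusterPt_lt_lt hφ hV h₁ h₂ he.1 he.2, EReal.coe_zero]
  have hclosure := hzero.closure_of_continuousWithinAt fun c hc =>
    (hVe_cont c (by rwa [closure_Ioo h.ne] at hc)).mono Ioo_subset_Icc_self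
  rw [closure_Ioo h.ne, closure_singleton] at hclosure
  exact ⟨hclosure (left_mem_Icc.2 h.le), hclosure (right_mem_Icc.2 h.le)⟩

theorem derivExtension_eq_of_mapClusterPt {V φ : ℝ → ℝ} {t₀ L : ℝ}
    (hφ : ContinuousOn φ (Ici t₀)) (hV : Tendsto (fun t => V (φ t)) atTop (𝓝 L))
    {a b : EReal} {Ve : EReal → EReal} (hVe_cont : ContinuousOn Ve (Icc a b))
    (hVe_eq : ∀ x : ℝ, a < x → x < b → Ve x = deriv V x) {c c' : EReal}
    (hc : c ∈ Icc a b) (hc' : c' ∈ Icc a b)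
    (h : MapClusterPt c atTop fun t => (φ t : EReal))
    (h' : MapClusterPt c' atTop fun t => (φ t : EReal)) : Ve c = Ve c' := by
  wlog hlt : c < c' generalizing c c'
  · rcases (not_lt.1 hlt).eq_or_lt with rfl | hlt'
    · rfl
    · exact (this hc' hc h' h hlt').symm
  obtain ⟨hz, hz'⟩ := derivExtension_eq_zero_of_mapClusterPt_lt hφ hV
    (hVe_cont.mono (Icc_subset_Icc hc.1 hc'.2))
    (fun x hx hx' => hVe_eq x (hc.1.trans_lt hx) (hx'.trans_le hc'.2)) h h' hlt
  rw [hz, hz']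

theorem derivV_converges_general (t₀ Vinf : ℝ) (a b : EReal)
    (V φ : ℝ → ℝ)
    (J : Set ℝ) (hJ : J = {x : ℝ | a < (x : EReal) ∧ (x : EReal) < b})
    (hφc : ContinuousOn φ (Set.Ici t₀)) (hφJ : ∀ t, t₀ ≤ t → φ t ∈ J)
    (hlim : Filter.Tendsto (fun t => V (φ t)) Filter.atTop (nhds Vinf))
    (Ve : EReal → EReal)
    (hVe_cont : ContinuousOn Ve (Set.Icc a b))
    (hVe_eq : ∀ x : ℝ, x ∈ J → Ve (x : EReal) = ((deriv V x : ℝ) : EReal)) :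
    ∃ L : EReal,
      Filter.Tendsto (fun t => ((deriv V (φ t) : ℝ) : EReal)) Filter.atTop (nhds L) := by
  subst hJ
  set ψ : ℝ → EReal := fun t => φ t
  have hψ : ∀ᶠ t in atTop, ψ t ∈ Icc a b :=
    (eventually_ge_atTop t₀).mono fun t ht => ⟨(hφJ t ht).1.le, (hφJ t ht).2.le⟩
  have hderiv : (fun t => Ve (ψ t)) =ᶠ[atTop] fun t => ((deriv V (φ t) : ℝ) : EReal) :=
    (eventually_ge_atTop t₀).mono fun t ht => hVe_eq _ (hφJ t ht)
  obtain ⟨c₀, hc₀⟩ := exists_clusterPt_of_compactSpace (map ψ atTop)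
  have hc₀ab : c₀ ∈ Icc a b := isClosed_Icc.mem_of_mapClusterPt hc₀ hψ
  refine ⟨Ve c₀, (tendsto_nhds_of_unique_mapClusterPt fun L hL => ?_).congr' hderiv⟩
  obtain ⟨c, hc, hcψ, rfl⟩ := hL.exists_mapClusterPt_eq_of_comp isClosed_Icc hVe_cont hψ
  exact derivExtension_eq_of_mapClusterPt hφc hlim hVe_cont (fun x h₁ h₂ => hVe_eq x ⟨h₁, h₂⟩)
    hc hc₀ab hcψ hc₀

/-- Let `V` be positive and C¹ on the interval `J = (a,b)` (with
`a, b` extended reals), `φ` continuous on `[t₀,∞)` with values in `J`,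
`V(φ(t)) → V_∞ > 0`, and suppose `V'` extends continuously (with extended-real
values) to the closure of `J` in the extended reals. Then `V'(φ(t))` converges
in the extended reals as `t → ∞`. -/
theorem derivV_converges (t₀ Vinf : ℝ) (a b : EReal) (hab : a < b)
    (V φ : ℝ → ℝ)
    (J : Set ℝ) (hJ : J = {x : ℝ | a < (x : EReal) ∧ (x : EReal) < b})
    (hV : ContDiffOn ℝ 1 V J) (hVpos : ∀ x ∈ J, 0 < V x)
    (hφc : ContinuousOn φ (Set.Ici t₀)) (hφJ : ∀ t, t₀ ≤ t → φ t ∈ J)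
    (hlim : Filter.Tendsto (fun t => V (φ t)) Filter.atTop (nhds Vinf))
    (hVinf : 0 < Vinf)
    (Ve : EReal → EReal)
    (hVe_cont : ContinuousOn Ve (Set.Icc a b))
    (hVe_eq : ∀ x : ℝ, x ∈ J → Ve (x : EReal) = ((deriv V x : ℝ) : EReal)) :
    ∃ L : EReal,
      Filter.Tendsto (fun t => ((deriv V (φ t) : ℝ) : EReal)) Filter.atTop (nhds L) :=
  derivV_converges_general t₀ Vinf a b V φ J hJ hφc hφJ hlim Ve hVe_cont hVe_eq
end
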